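/- Let n11, n22, n12, n21 ∈ ℕ satisfy (n22−n21)⁺ − (n22−n12)⁺ ≤ ((n12−n11)⁺ − (n21−n11)⁺)⁺ and (n11−n12)⁺ − (n11−n21)⁺ ≤ ((n21−n22)⁺ − (n12−n22)⁺)⁺. Then every rate pair (R1,R2) in C_LDIC/FB achieving the maximum sum-rate R1+R2 = min(max(n22,n21)+(n11−n21)⁺, max(n11,n12)+(n22−n12)⁺) and with R1 ≤ min(max(n11,n12),max(n11,n21)), R2 ≤ min(max(n22,n21),max(n22,n12)), R1,R2 ≥ 0, satisfies R1 ≥ (n11−n12)⁺ and R2 ≥ (n22−n21)⁺. -/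

import Mathlib

/-!
Write `x⁺` for `max x 0` and `S` for the optimal sum rate. As `R₁ = S - R₂` and `R₂` is at most
`B₂ = min (max n₂₂ n₂₁) (max n₂₂ n₁₂)`, it suffices that `(n₁₁ - n₁₂)⁺ + B₂` is at most both
terms of `S`. For the second term, `(n₁₁ - n₁₂)⁺ + max n₂₂ n₁₂` already equals it, because
`max x y = (x - y)⁺ + y`. For the first, writing `max n₂₂ n₂₁ = n₂₂ + p` and
`max n₂₂ n₁₂ = n₂₂ + q`, it becomes `(n₁₁ - n₁₂)⁺ - (n₁₁ - n₂₁)⁺ ≤ p - min p q = (p - q)⁺`,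
which is the hypothesis. The bound on `R₂` is symmetric.
-/

section LinearOrderedAddCommGroup

variable {α : Type*} [AddCommGroup α] [LinearOrder α] [IsOrderedAddMonoid α]

theorem max_eq_max_sub_zero_add (x y : α) : max x y = max (x - y) 0 + y := by
  rw [← max_add_add_right, sub_add_cancel, zero_add]

theorem sub_min_eq_max_sub_zero (x y : α) : x - min x y = max (x - y) 0 := by
  rw [← max_sub_sub_left, sub_self, max_comm]

theorem max_sub_zero_add_max_eq (a b c : α) :
    max (a - c) 0 + max b c = max a c + max (b - c) 0 := by
  rw [max_eq_max_sub_zero_add a c, max_eq_max_sub_zero_add b c]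
  abel

theorem max_sub_zero_add_min_max_le
    {a b c d : α} (h : max (a - c) 0 - max (a - d) 0 ≤ max (max (d - b) 0 - max (c - b) 0) 0) :
    max (a - c) 0 + min (max b d) (max b c) ≤ max b d + max (a - d) 0 := by
  set p := max (d - b) 0
  set q := max (c - b) 0
  rw [← sub_min_eq_max_sub_zero p q, sub_le_sub_iff] at h
  rw [max_comm b d, max_comm b c, max_eq_max_sub_zero_add d b, max_eq_max_sub_zero_add c b,
    min_add_add_right]
  calc max (a - c) 0 + (min p q + b) = max (a - c) 0 + min p q + b := by abel
    _ ≤ p + max (a - d) 0 + b := by gcongr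
    _ = p + b + max (a - d) 0 := by abel

theorem max_sub_zero_le_of_sum_rate_eq {a b c d R₁ R₂ : α}
    (h : max (a - c) 0 - max (a - d) 0 ≤ max (max (d - b) 0 - max (c - b) 0) 0)
    (hR₂ : R₂ ≤ min (max b d) (max b c))
    (hsum : R₁ + R₂ = min (max b d + max (a - d) 0) (max a c + max (b - c) 0)) :
    max (a - c) 0 ≤ R₁ := by
  have hbound : max (a - c) 0 + min (max b d) (max b c) ≤ R₁ + R₂ := by
    rw [hsum, ← max_sub_zero_add_max_eq a b c]
    exact le_min (max_sub_zero_add_min_max_le h) (by gcongr; exact min_le_right _ _)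
  exact le_of_add_le_add_right (hbound.trans (by gcongr))

end LinearOrderedAddCommGroup

theorem sum_rate_optimal_in_ne_region_general (n11 n22 n12 n21 : ℕ)
    (h1 : max ((n22 : ℝ) - n21) 0 - max ((n22 : ℝ) - n12) 0 ≤
          max (max ((n12 : ℝ) - n11) 0 - max ((n21 : ℝ) - n11) 0) 0)
    (h2 : max ((n11 : ℝ) - n12) 0 - max ((n11 : ℝ) - n21) 0 ≤
          max (max ((n21 : ℝ) - n22) 0 - max ((n12 : ℝ) - n22) 0) 0)
    (R1 R2 : ℝ)
    (c1 : R1 ≤ min (max (n11 : ℝ) (n12 : ℝ)) (max (n11 : ℝ) (n21 : ℝ)))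
    (c2 : R2 ≤ min (max (n22 : ℝ) (n21 : ℝ)) (max (n22 : ℝ) (n12 : ℝ)))
    (hsum : R1 + R2 = min (max (n22 : ℝ) (n21 : ℝ) + max ((n11 : ℝ) - n21) 0)
                          (max (n11 : ℝ) (n12 : ℝ) + max ((n22 : ℝ) - n12) 0)) :
    max ((n11 : ℝ) - n12) 0 ≤ R1 ∧ max ((n22 : ℝ) - n21) 0 ≤ R2 :=
  ⟨max_sub_zero_le_of_sum_rate_eq h2 c2 hsum,
    max_sub_zero_le_of_sum_rate_eq h1 c1 (by rw [add_comm, hsum, min_comm])⟩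

/-- Sum-rate optimality (Lemma 2): under the stated conditions, every
sum-rate-optimal point of C_LDIC/FB lies in the 0-NE region. -/
theorem sum_rate_optimal_in_ne_region (n11 n22 n12 n21 : ℕ)
    (h1 : max ((n22 : ℝ) - n21) 0 - max ((n22 : ℝ) - n12) 0 ≤
          max (max ((n12 : ℝ) - n11) 0 - max ((n21 : ℝ) - n11) 0) 0)
    (h2 : max ((n11 : ℝ) - n12) 0 - max ((n11 : ℝ) - n21) 0 ≤
          max (max ((n21 : ℝ) - n22) 0 - max ((n12 : ℝ) - n22) 0) 0)
    (R1 R2 : ℝ) (hR1 : 0 ≤ R1) (hR2 : 0 ≤ R2)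
    (c1 : R1 ≤ min (max (n11 : ℝ) (n12 : ℝ)) (max (n11 : ℝ) (n21 : ℝ)))
    (c2 : R2 ≤ min (max (n22 : ℝ) (n21 : ℝ)) (max (n22 : ℝ) (n12 : ℝ)))
    (hsum : R1 + R2 = min (max (n22 : ℝ) (n21 : ℝ) + max ((n11 : ℝ) - n21) 0)
                          (max (n11 : ℝ) (n12 : ℝ) + max ((n22 : ℝ) - n12) 0)) :
    max ((n11 : ℝ) - n12) 0 ≤ R1 ∧ max ((n22 : ℝ) - n21) 0 ≤ R2 :=
  sum_rate_optimal_in_ne_region_general n11 n22 n12 n21 h1 h2 R1 R2 c1 c2 hsum
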